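/- Graph-degeneration equations: Let k be a field and consider the system (for points (t_0:t_1) ∈ P^1, z ∈ k, x, y ∈ k^{n+2}) given by equations (2.18) of the cone construction with t_0 = 1, t_1 = 0 (i.e. the fiber over t = 0): x_i y_j − x_j y_i = 0 for 1 ≤ i,j ≤ n+1−h; x_i y_j − x_j y_i = 0 for n+2−h ≤ i,j ≤ n+1; y_i x_j = 0 for j ∈ [1, n+1−h], i ∈ [n+2−h, n+1]; 𝕩 y_j − 𝕪 x_j = 0 for j ∈ [1, n+1−h]; y_j 𝕩 = 0 for j ∈ [n+2−h, n+1]; where 𝕩 = z x_0 + x_{n+2−h} and 𝕪 = z y_0 + y_{n+2−h}. Then the solution set is contained in the union of the two sets A = { (z,x,y) : x_j = 0 for all j ∈ [1, n+1−h] and 𝕩 = 0 } and B = { (z,x,y) : y_i = 0 for all i ∈ [n+2−h, n+1] and x_i y_j − x_j y_i = 0 for 1 ≤ i, j ≤ n+1−h and 𝕩 y_j = 𝕪 x_j for j ∈ [1,n+1−h] }. -/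

import Mathlib

/-- Graph-degeneration equations: the fiber over `t = 0` of the system (2.18) is contained in
the union of `A = {x_1 = ⋯ = x_{n+1-h} = 0, 𝕩 = 0}` and
`B = {y_{n+2-h} = ⋯ = y_{n+1} = 0, minors of (x_1..x_{n+1-h}),(y_1..y_{n+1-h}) vanish,
𝕩 y_j = 𝕪 x_j}`, where `𝕩 = z x_0 + x_{n+2-h}`, `𝕪 = z y_0 + y_{n+2-h}`. -/
theorem fiber_at_zero_decomposition
    (k : Type*) [Field k] (n h : ℕ) (h1 : 1 ≤ h) :
    {p : k × (Fin (n + 2) → k) × (Fin (n + 2) → k) |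
      (∀ i j : Fin (n + 2), 1 ≤ (i : ℕ) → (i : ℕ) ≤ n + 1 - h → 1 ≤ (j : ℕ) →
        (j : ℕ) ≤ n + 1 - h → p.2.1 i * p.2.2 j - p.2.1 j * p.2.2 i = 0) ∧
      (∀ i j : Fin (n + 2), n + 2 - h ≤ (i : ℕ) → n + 2 - h ≤ (j : ℕ) →
        p.2.1 i * p.2.2 j - p.2.1 j * p.2.2 i = 0) ∧
      (∀ i j : Fin (n + 2), n + 2 - h ≤ (i : ℕ) → 1 ≤ (j : ℕ) → (j : ℕ) ≤ n + 1 - h →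
        p.2.2 i * p.2.1 j = 0) ∧
      (∀ j : Fin (n + 2), 1 ≤ (j : ℕ) → (j : ℕ) ≤ n + 1 - h →
        (p.1 * p.2.1 ⟨0, by omega⟩ + p.2.1 ⟨n + 2 - h, by omega⟩) * p.2.2 j
          - (p.1 * p.2.2 ⟨0, by omega⟩ + p.2.2 ⟨n + 2 - h, by omega⟩) * p.2.1 j = 0) ∧
      (∀ j : Fin (n + 2), n + 2 - h ≤ (j : ℕ) →
        p.2.2 j * (p.1 * p.2.1 ⟨0, by omega⟩ + p.2.1 ⟨n + 2 - h, by omega⟩) = 0)} ⊆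
    {p : k × (Fin (n + 2) → k) × (Fin (n + 2) → k) |
      (∀ j : Fin (n + 2), 1 ≤ (j : ℕ) → (j : ℕ) ≤ n + 1 - h → p.2.1 j = 0) ∧
      p.1 * p.2.1 ⟨0, by omega⟩ + p.2.1 ⟨n + 2 - h, by omega⟩ = 0} ∪
    {p : k × (Fin (n + 2) → k) × (Fin (n + 2) → k) |
      (∀ i : Fin (n + 2), n + 2 - h ≤ (i : ℕ) → p.2.2 i = 0) ∧
      (∀ i j : Fin (n + 2), 1 ≤ (i : ℕ) → (i : ℕ) ≤ n + 1 - h → 1 ≤ (j : ℕ) →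
        (j : ℕ) ≤ n + 1 - h → p.2.1 i * p.2.2 j - p.2.1 j * p.2.2 i = 0) ∧
      (∀ j : Fin (n + 2), 1 ≤ (j : ℕ) → (j : ℕ) ≤ n + 1 - h →
        (p.1 * p.2.1 ⟨0, by omega⟩ + p.2.1 ⟨n + 2 - h, by omega⟩) * p.2.2 j
          = (p.1 * p.2.2 ⟨0, by omega⟩ + p.2.2 ⟨n + 2 - h, by omega⟩) * p.2.1 j)} := by
  rintro p ⟨hx_minors, -, hyx, hcone_minors, hyx_cone⟩
  by_cases hy : ∀ i : Fin (n + 2), n + 2 - h ≤ (i : ℕ) → p.2.2 i = 0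
  · exact Or.inr ⟨hy, hx_minors, fun j hj1 hj2 => sub_eq_zero.mp (hcone_minors j hj1 hj2)⟩
  · -- a single nonzero `y_i` with `i ≥ n+2-h` cancels from the mixed equations
    push Not at hy
    obtain ⟨i, hi, hyi⟩ := hy
    exact Or.inl ⟨fun j hj1 hj2 => (mul_eq_zero_iff_left hyi).mp (hyx i j hi hj1 hj2),
      (mul_eq_zero_iff_left hyi).mp (hyx_cone i hi)⟩
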